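/- arXiv:2103.16934 — 4 statements merged into one kernel-verified Lean document; each statement's English description precedes it below -/
import Mathlib

section
/- Let F: ℝⁿ ⇉ ℝⁿ be a set-valued mapping with convex graph, (u,v) ∈ gph F, and v* ∈ ℝⁿ with v ∈ F_A(u; v*), i.e., ⟨v, v*⟩ = H_F(u, v*). Then u* ∈ ℝⁿ satisfies (u*, −v*) ∈ K_F*(u,v) (the dual cone of the tangent cone of gph F at (u,v)) if and only if H_F(ũ, v*) − H_F(u, v*) ≤ ⟨u*, ũ − u⟩ for all ũ ∈ ℝⁿ. -/
open RealInnerProductSpace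

/-- Hamiltonian of a set-valued mapping, with values in the extended reals. -/
noncomputable def HamE {n : ℕ} (F : EuclideanSpace ℝ (Fin n) → Set (EuclideanSpace ℝ (Fin n)))
    (u vs : EuclideanSpace ℝ (Fin n)) : EReal :=
  sSup ((fun v => ((⟪v, vs⟫ : ℝ) : EReal)) '' F u)

/-- `coneOf A` = positive scalar multiples of elements of `A`. -/
def coneOf {X : Type*} [SMul ℝ X] (A : Set X) : Set X :=
  {z | ∃ μ : ℝ, 0 < μ ∧ ∃ a ∈ A, z = μ • a}

/-! A linear functional is nonnegative on the cone generated by `gph F - (u, v)` iff it is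
nonnegative on `gph F - (u, v)` itself. At a point `(ũ, ṽ)` of the graph that inequality reads
`⟨ṽ, v*⟩ ≤ ⟨v, v*⟩ + ⟨u*, ũ - u⟩`, and taking the supremum over `ṽ ∈ F ũ` (with
`⟨v, v*⟩ = H_F(u, v*)`) turns it into the Hamiltonian inequality. -/

theorem forall_mem_coneOf_nonneg_iff {X : Type*} [SMul ℝ X] (A : Set X) (f : X → ℝ)
    (hf : ∀ μ : ℝ, 0 < μ → ∀ x, f (μ • x) = μ * f x) :
    (∀ w ∈ coneOf A, 0 ≤ f w) ↔ ∀ a ∈ A, 0 ≤ f a := by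
  constructor
  · intro h a ha
    simpa [hf 1 one_pos] using h (1 • a) ⟨1, one_pos, a, ha, rfl⟩
  · rintro h _ ⟨μ, hμ, a, ha, rfl⟩
    rw [hf μ hμ]
    exact mul_nonneg hμ.le (h a ha)

theorem HamE_le_coe_iff {n : ℕ} (F : EuclideanSpace ℝ (Fin n) → Set (EuclideanSpace ℝ (Fin n)))
    (u vs : EuclideanSpace ℝ (Fin n)) (c : ℝ) :
    HamE F u vs ≤ c ↔ ∀ v ∈ F u, ⟪v, vs⟫ ≤ c := by
  simp only [HamE, sSup_le_iff, Set.forall_mem_image, EReal.coe_le_coe_iff]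

theorem stmt2_general {n : ℕ} (F : EuclideanSpace ℝ (Fin n) → Set (EuclideanSpace ℝ (Fin n)))
    (u v vs us : EuclideanSpace ℝ (Fin n))
    (hargmax : ((⟪v, vs⟫ : ℝ) : EReal) = HamE F u vs) :
    (∀ w ∈ coneOf ((fun p => p - (u, v)) ''
        {p : EuclideanSpace ℝ (Fin n) × EuclideanSpace ℝ (Fin n) | p.2 ∈ F p.1}),
      0 ≤ (⟪w.1, us⟫ : ℝ) + ⟪w.2, -vs⟫) ↔
    (∀ ut : EuclideanSpace ℝ (Fin n),
      HamE F ut vs ≤ HamE F u vs + ((⟪us, ut - u⟫ : ℝ) : EReal)) := by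
  have homogeneous : ∀ μ : ℝ, 0 < μ → ∀ w : EuclideanSpace ℝ (Fin n) × EuclideanSpace ℝ (Fin n),
      ⟪(μ • w).1, us⟫ + ⟪(μ • w).2, -vs⟫ = μ * (⟪w.1, us⟫ + ⟪w.2, -vs⟫) := by
    intro μ _ w
    simp only [Prod.smul_fst, Prod.smul_snd, real_inner_smul_left]
    ring
  rw [forall_mem_coneOf_nonneg_iff _ _ homogeneous, Set.forall_mem_image, ← hargmax]
  simp only [← EReal.coe_add, HamE_le_coe_iff, Set.mem_ofPred_eq, Prod.forall]
  refine forall_congr' fun ut => forall_congr' fun vt => imp_congr_right fun _ => ?_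
  simp only [Prod.fst_sub, Prod.snd_sub, inner_sub_left, inner_neg_right, real_inner_comm us]
  constructor <;> intro h <;> linarith

/-- For a convex set-valued mapping `F` and `v ∈ F_A(u; v*)`, a vector `u*` satisfies
`(u*, −v*) ∈ K_F*(u,v)` iff `H_F(ũ, v*) − H_F(u, v*) ≤ ⟨u*, ũ − u⟩` for all `ũ`. -/
theorem stmt2 {n : ℕ} (F : EuclideanSpace ℝ (Fin n) → Set (EuclideanSpace ℝ (Fin n)))
    (hF : Convex ℝ {p : EuclideanSpace ℝ (Fin n) × EuclideanSpace ℝ (Fin n) | p.2 ∈ F p.1})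
    (u v vs us : EuclideanSpace ℝ (Fin n)) (hv : v ∈ F u)
    (hargmax : ((⟪v, vs⟫ : ℝ) : EReal) = HamE F u vs) :
    (∀ w ∈ coneOf ((fun p => p - (u, v)) ''
        {p : EuclideanSpace ℝ (Fin n) × EuclideanSpace ℝ (Fin n) | p.2 ∈ F p.1}),
      0 ≤ (⟪w.1, us⟫ : ℝ) + ⟪w.2, -vs⟫) ↔
    (∀ ut : EuclideanSpace ℝ (Fin n),
      HamE F ut vs ≤ HamE F u vs + ((⟪us, ut - u⟫ : ℝ) : EReal)) :=
  stmt2_general F u v vs us hargmax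
end

section
/- Let A be an n×n real matrix, B an n×r real matrix, U ⊆ ℝʳ a convex closed set, and define F(u) = {Au + Bw : w ∈ U}. Fix (u, v) ∈ gph F with v = Au + Bw̃, w̃ ∈ U, and v* ∈ ℝⁿ with v ∈ F_A(u; v*). Then F*(v*; (u,v)) = {Aᵀv*} if −Bᵀv* ∈ [cone(U − w̃)]*, and F*(v*; (u,v)) = ∅ otherwise, where [cone(U − w̃)]* = {p ∈ ℝʳ : ⟨w − w̃, p⟩ ≥ 0 ∀ w ∈ U}. -/
/-!
Since `v = Au + Bw̃` attains the Hamiltonian, `w̃` maximizes `w ↦ ⟨Bw, v*⟩` on `U`; this is exactly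
`-Bᵀv* ∈ [cone(U - w̃)]*`, so the second alternative never occurs. Consequently
`H_F(ũ, v*) = ⟨Aũ + Bw̃, v*⟩` is affine in `ũ` with linear part `⟨Aᵀv*, ·⟩`, and the only
subgradient of an affine function is its slope.
-/

open Matrix

/-- Hamiltonian for set-valued mappings on `Fin n → ℝ` using the dot product. -/
noncomputable def HamD {n : ℕ} (F : (Fin n → ℝ) → Set (Fin n → ℝ))
    (u vs : Fin n → ℝ) : EReal :=
  sSup ((fun v => ((v ⬝ᵥ vs : ℝ) : EReal)) '' F u)

theorem transpose_mulVec_dotProduct {ι κ R : Type*} [Fintype ι] [Fintype κ] [CommSemiring R]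
    (M : Matrix ι κ R) (y : ι → R) (x : κ → R) : (Mᵀ *ᵥ y) ⬝ᵥ x = (M *ᵥ x) ⬝ᵥ y := by
  rw [mulVec_transpose, ← dotProduct_mulVec, dotProduct_comm]

theorem forall_dotProduct_le_iff {ι R : Type*} [Fintype ι] [Ring R] [LinearOrder R]
    [IsStrictOrderedRing R] {a b : ι → R} :
    (∀ x, a ⬝ᵥ x ≤ b ⬝ᵥ x) ↔ a = b := by
  refine ⟨fun h => ?_, fun h x => h ▸ le_rfl⟩
  have hsq : (a - b) ⬝ᵥ (a - b) ≤ 0 := by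
    rw [sub_dotProduct]
    exact sub_nonpos.mpr (h (a - b))
  have hnonneg : 0 ≤ (a - b) ⬝ᵥ (a - b) := Finset.sum_nonneg fun _ _ => mul_self_nonneg _
  exact sub_eq_zero.mp (dotProduct_self_eq_zero.mp (le_antisymm hsq hnonneg))

section HamD

variable {n : ℕ} {F : (Fin n → ℝ) → Set (Fin n → ℝ)} {u v vs : Fin n → ℝ}

theorem le_HamD_of_mem (hv : v ∈ F u) : ((v ⬝ᵥ vs : ℝ) : EReal) ≤ HamD F u vs :=
  le_sSup ⟨v, hv, rfl⟩

theorem HamD_eq_of_forall_le (hv : v ∈ F u) (hle : ∀ v' ∈ F u, v' ⬝ᵥ vs ≤ v ⬝ᵥ vs) :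
    HamD F u vs = ((v ⬝ᵥ vs : ℝ) : EReal) := by
  refine le_antisymm (sSup_le ?_) (le_HamD_of_mem hv)
  rintro _ ⟨v', hv', rfl⟩
  exact EReal.coe_le_coe (hle v' hv')

end HamD

section Affine

variable {n r : ℕ} {A : Matrix (Fin n) (Fin n) ℝ} {B : Matrix (Fin n) (Fin r) ℝ}
  {U : Set (Fin r → ℝ)} {F : (Fin n → ℝ) → Set (Fin n → ℝ)} {wt : Fin r → ℝ} {vs : Fin n → ℝ}

theorem mulVec_dotProduct_le_of_HamD_eq (hF : ∀ u, F u = {v | ∃ w ∈ U, v = A *ᵥ u + B *ᵥ w})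
    {u : Fin n → ℝ} (hmax : (((A *ᵥ u + B *ᵥ wt) ⬝ᵥ vs : ℝ) : EReal) = HamD F u vs)
    {w : Fin r → ℝ} (hw : w ∈ U) : (B *ᵥ w) ⬝ᵥ vs ≤ (B *ᵥ wt) ⬝ᵥ vs := by
  have hle := le_HamD_of_mem (vs := vs) (show A *ᵥ u + B *ᵥ w ∈ F u from hF u ▸ ⟨w, hw, rfl⟩)
  rw [← hmax, EReal.coe_le_coe_iff, add_dotProduct, add_dotProduct] at hle
  linarith

theorem HamD_eq_of_forall_mulVec_dotProduct_le
    (hF : ∀ u, F u = {v | ∃ w ∈ U, v = A *ᵥ u + B *ᵥ w}) (hwt : wt ∈ U)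
    (hmax : ∀ w ∈ U, (B *ᵥ w) ⬝ᵥ vs ≤ (B *ᵥ wt) ⬝ᵥ vs) (u : Fin n → ℝ) :
    HamD F u vs = (((A *ᵥ u + B *ᵥ wt) ⬝ᵥ vs : ℝ) : EReal) := by
  refine HamD_eq_of_forall_le (hF u ▸ ⟨wt, hwt, rfl⟩) ?_
  rintro _ hv
  obtain ⟨w, hw, rfl⟩ := hF u ▸ hv
  simpa only [add_dotProduct, add_le_add_iff_left] using hmax w hw

theorem neg_transpose_mulVec_mem_dualCone_of_forall_le
    (hmax : ∀ w ∈ U, (B *ᵥ w) ⬝ᵥ vs ≤ (B *ᵥ wt) ⬝ᵥ vs) :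
    ∀ w ∈ U, 0 ≤ (w - wt) ⬝ᵥ (-(Bᵀ *ᵥ vs)) := by
  intro w hw
  rw [dotProduct_neg, dotProduct_comm, transpose_mulVec_dotProduct, mulVec_sub, sub_dotProduct]
  linarith [hmax w hw]

theorem affine_subgradients_eq_singleton (u : Fin n → ℝ) (c : ℝ) :
    {us : Fin n → ℝ | ∀ ut, ((((A *ᵥ ut) ⬝ᵥ vs + c : ℝ)) : EReal) ≤
      (((A *ᵥ u) ⬝ᵥ vs + c : ℝ) : EReal) + ((us ⬝ᵥ (ut - u) : ℝ) : EReal)} = {Aᵀ *ᵥ vs} := by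
  ext us
  simp only [Set.mem_ofPred_eq, Set.mem_singleton_iff, ← EReal.coe_add, EReal.coe_le_coe_iff]
  rw [eq_comm, ← forall_dotProduct_le_iff]
  refine ⟨fun h x => ?_, fun h ut => ?_⟩
  · have hx := h (u + x)
    rw [add_sub_cancel_left, mulVec_add, add_dotProduct] at hx
    rw [transpose_mulVec_dotProduct]
    linarith
  · have hx := h (ut - u)
    rw [transpose_mulVec_dotProduct, mulVec_sub, sub_dotProduct] at hx
    linarith

end Affine

theorem stmt10_general {n r : ℕ} (A : Matrix (Fin n) (Fin n) ℝ) (B : Matrix (Fin n) (Fin r) ℝ)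
    (U : Set (Fin r → ℝ))
    (F : (Fin n → ℝ) → Set (Fin n → ℝ))
    (hFdef : ∀ u, F u = {v | ∃ w ∈ U, v = A.mulVec u + B.mulVec w})
    (u v : Fin n → ℝ) (wt : Fin r → ℝ) (hwt : wt ∈ U) (hvdef : v = A.mulVec u + B.mulVec wt)
    (vs : Fin n → ℝ) (hargmax : ((v ⬝ᵥ vs : ℝ) : EReal) = HamD F u vs) :
    ((∀ w ∈ U, 0 ≤ (w - wt) ⬝ᵥ (-(Bᵀ.mulVec vs)) ) →
      {us : Fin n → ℝ | ∀ ut : Fin n → ℝ,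
        HamD F ut vs ≤ HamD F u vs + ((us ⬝ᵥ (ut - u) : ℝ) : EReal)} = {Aᵀ.mulVec vs}) ∧
    ((¬ ∀ w ∈ U, 0 ≤ (w - wt) ⬝ᵥ (-(Bᵀ.mulVec vs))) →
      {us : Fin n → ℝ | ∀ ut : Fin n → ℝ,
        HamD F ut vs ≤ HamD F u vs + ((us ⬝ᵥ (ut - u) : ℝ) : EReal)} = ∅) := by
  subst hvdef
  have hmax : ∀ w ∈ U, (B *ᵥ w) ⬝ᵥ vs ≤ (B *ᵥ wt) ⬝ᵥ vs :=
    fun _ hw => mulVec_dotProduct_le_of_HamD_eq hFdef hargmax hw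
  have hHam := HamD_eq_of_forall_mulVec_dotProduct_le hFdef hwt hmax
  refine ⟨fun _ => ?_, fun hcone => (hcone (neg_transpose_mulVec_mem_dualCone_of_forall_le hmax)).elim⟩
  simp only [hHam, add_dotProduct]
  exact affine_subgradients_eq_singleton u _

/-- LAM formula (36) for the linear mapping `F(u) = Au + BU`. -/
theorem stmt10 {n r : ℕ} (A : Matrix (Fin n) (Fin n) ℝ) (B : Matrix (Fin n) (Fin r) ℝ)
    (U : Set (Fin r → ℝ)) (hUconv : Convex ℝ U) (hUcl : IsClosed U)
    (F : (Fin n → ℝ) → Set (Fin n → ℝ))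
    (hFdef : ∀ u, F u = {v | ∃ w ∈ U, v = A.mulVec u + B.mulVec w})
    (u v : Fin n → ℝ) (wt : Fin r → ℝ) (hwt : wt ∈ U) (hvdef : v = A.mulVec u + B.mulVec wt)
    (vs : Fin n → ℝ) (hargmax : ((v ⬝ᵥ vs : ℝ) : EReal) = HamD F u vs) :
    ((∀ w ∈ U, 0 ≤ (w - wt) ⬝ᵥ (-(Bᵀ.mulVec vs)) ) →
      {us : Fin n → ℝ | ∀ ut : Fin n → ℝ,
        HamD F ut vs ≤ HamD F u vs + ((us ⬝ᵥ (ut - u) : ℝ) : EReal)} = {Aᵀ.mulVec vs}) ∧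
    ((¬ ∀ w ∈ U, 0 ≤ (w - wt) ⬝ᵥ (-(Bᵀ.mulVec vs))) →
      {us : Fin n → ℝ | ∀ ut : Fin n → ℝ,
        HamD F ut vs ≤ HamD F u vs + ((us ⬝ᵥ (ut - u) : ℝ) : EReal)} = ∅) :=
  stmt10_general A B U F hFdef u v wt hwt hvdef vs hargmax
end

section
/- Let A, B be s×n real matrices, d ∈ ℝˢ, and define the polyhedral set-valued mapping F(u) = {v ∈ ℝⁿ : Au − Bv ≤ d} (componentwise inequality). Let (ũ, ṽ) ∈ gph F and v* ∈ ℝⁿ with ṽ ∈ F_A(ũ; v*). If q ∈ ℝˢ satisfies q ≥ 0, v* = −Bᵀq, and ⟨Aũ − Bṽ − d, q⟩ = 0, then −Aᵀq ∈ F*(v*; (ũ, ṽ)), i.e., H_F(u, v*) − H_F(ũ, v*) ≤ ⟨−Aᵀq, u − ũ⟩ for all u ∈ ℝⁿ. -/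
/-!
Weak duality for the linear program `sup {⟨v, -Bᵀq⟩ : Au - Bv ≤ d}`: since `q ≥ 0`, every
feasible `v` has `⟨v, -Bᵀq⟩ = -⟨Bv, q⟩ ≤ ⟨d - Au, q⟩`, a bound that is affine in `u` with
slope `-Aᵀq`. Complementary slackness says that `ṽ` attains this bound at `ũ`, so the bound
at `u` is `⟨ṽ, v*⟩ + ⟨-Aᵀq, u - ũ⟩`, and `⟨ṽ, v*⟩ = H_F(ũ, v*)`.
-/

open Matrix

lemma HamD_le_coe {n : ℕ} {F : (Fin n → ℝ) → Set (Fin n → ℝ)} {u vs : Fin n → ℝ} {c : ℝ}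
    (h : ∀ v ∈ F u, v ⬝ᵥ vs ≤ c) : HamD F u vs ≤ c := by
  refine sSup_le ?_
  rintro _ ⟨v, hv, rfl⟩
  exact EReal.coe_le_coe (h v hv)

namespace Matrix

variable {m n R : Type*} [Fintype m] [Fintype n] [CommRing R]

lemma dotProduct_neg_transpose_mulVec (B : Matrix m n R) (v : n → R) (q : m → R) :
    v ⬝ᵥ -(Bᵀ *ᵥ q) = -(B *ᵥ v ⬝ᵥ q) := by
  rw [dotProduct_neg, dotProduct_mulVec, vecMul_transpose]

lemma neg_transpose_mulVec_dotProduct_sub (A : Matrix m n R) (q : m → R) (u u' : n → R) :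
    -(Aᵀ *ᵥ q) ⬝ᵥ (u - u') = (A *ᵥ u' - A *ᵥ u) ⬝ᵥ q := by
  rw [dotProduct_comm, dotProduct_neg, dotProduct_mulVec, vecMul_transpose, mulVec_sub,
    ← neg_dotProduct, neg_sub]

lemma dotProduct_neg_transpose_mulVec_le [PartialOrder R] [IsOrderedRing R]
    {A B : Matrix m n R} {d q : m → R} {u v : n → R}
    (hv : A *ᵥ u - B *ᵥ v ≤ d) (hq : 0 ≤ q) :
    v ⬝ᵥ -(Bᵀ *ᵥ q) ≤ (d - A *ᵥ u) ⬝ᵥ q := by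
  rw [dotProduct_neg_transpose_mulVec, ← neg_dotProduct]
  refine dotProduct_le_dotProduct_of_nonneg_right ?_ hq
  rwa [le_sub_iff_add_le', ← sub_eq_add_neg]

lemma dotProduct_neg_transpose_mulVec_eq_of_dotProduct_eq_zero
    {A B : Matrix m n R} {d q : m → R} {u v : n → R}
    (hcompl : (A *ᵥ u - B *ᵥ v - d) ⬝ᵥ q = 0) :
    v ⬝ᵥ -(Bᵀ *ᵥ q) = (d - A *ᵥ u) ⬝ᵥ q := by
  rw [dotProduct_neg_transpose_mulVec]
  simp only [sub_dotProduct] at hcompl ⊢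
  linear_combination hcompl

end Matrix

theorem stmt13_general {s n : ℕ} (A B : Matrix (Fin s) (Fin n) ℝ) (d : Fin s → ℝ)
    (F : (Fin n → ℝ) → Set (Fin n → ℝ))
    (hFdef : ∀ u, F u = {v | A.mulVec u - B.mulVec v ≤ d})
    (ut vt : Fin n → ℝ) (vs : Fin n → ℝ)
    (hargmax : ((vt ⬝ᵥ vs : ℝ) : EReal) = HamD F ut vs)
    (q : Fin s → ℝ) (hq : 0 ≤ q) (hvs : vs = -(Bᵀ.mulVec q))
    (hcompl : (A.mulVec ut - B.mulVec vt - d) ⬝ᵥ q = 0) :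
    ∀ u : Fin n → ℝ,
      HamD F u vs ≤ HamD F ut vs + (((-(Aᵀ.mulVec q)) ⬝ᵥ (u - ut) : ℝ) : EReal) := by
  intro u
  subst hvs
  rw [← hargmax, ← EReal.coe_add]
  refine HamD_le_coe fun v hv => ?_
  rw [hFdef] at hv
  calc v ⬝ᵥ -(Bᵀ *ᵥ q) ≤ (d - A *ᵥ u) ⬝ᵥ q := dotProduct_neg_transpose_mulVec_le hv hq
    _ = (d - A *ᵥ ut) ⬝ᵥ q + (A *ᵥ ut - A *ᵥ u) ⬝ᵥ q := by
      rw [← add_dotProduct, sub_add_sub_cancel]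
    _ = vt ⬝ᵥ -(Bᵀ *ᵥ q) + -(Aᵀ *ᵥ q) ⬝ᵥ (u - ut) := by
      rw [dotProduct_neg_transpose_mulVec_eq_of_dotProduct_eq_zero hcompl,
        neg_transpose_mulVec_dotProduct_sub]

/-- LAM of the polyhedral mapping `F(u) = {v : Au − Bv ≤ d}`: if `q ≥ 0`, `v* = −Bᵀq` and
`⟨Aũ − Bṽ − d, q⟩ = 0`, then `−Aᵀq ∈ F*(v*; (ũ, ṽ))`. -/
theorem stmt13 {s n : ℕ} (A B : Matrix (Fin s) (Fin n) ℝ) (d : Fin s → ℝ)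
    (F : (Fin n → ℝ) → Set (Fin n → ℝ))
    (hFdef : ∀ u, F u = {v | A.mulVec u - B.mulVec v ≤ d})
    (ut vt : Fin n → ℝ) (hvt : vt ∈ F ut) (vs : Fin n → ℝ)
    (hargmax : ((vt ⬝ᵥ vs : ℝ) : EReal) = HamD F ut vs)
    (q : Fin s → ℝ) (hq : 0 ≤ q) (hvs : vs = -(Bᵀ.mulVec q))
    (hcompl : (A.mulVec ut - B.mulVec vt - d) ⬝ᵥ q = 0) :
    ∀ u : Fin n → ℝ,
      HamD F u vs ≤ HamD F ut vs + (((-(Aᵀ.mulVec q)) ⬝ᵥ (u - ut) : ℝ) : EReal) :=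
  stmt13_general A B d F hFdef ut vt vs hargmax q hq hvs hcompl
end

section
/- Sufficiency theorem for the parabolic differential inclusion problem (Theorem 5.1, pointwise core): Let g(·): ℝⁿ → ℝ be convex, F: ℝⁿ ⇉ ℝⁿ have convex graph, and let ũ, v be such that ṽ := v ∈ F(ũ) with ṽ ∈ F_A(ũ; p) for some p ∈ ℝⁿ, and suppose q ∈ F*(p; (ũ, ṽ)) − ∂g(ũ) in the sense that q + s ∈ F*(p; (ũ, ṽ)) for some s ∈ ∂g(ũ). Then for every (u, w) ∈ gph F: g(u) − g(ũ) ≥ ⟨w − ṽ, p⟩ − ⟨q, u − ũ⟩. -/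
open RealInnerProductSpace

section Hamiltonian

variable {n : ℕ} {F : EuclideanSpace ℝ (Fin n) → Set (EuclideanSpace ℝ (Fin n))}
  {u w p : EuclideanSpace ℝ (Fin n)}

theorem inner_le_HamE_of_mem (hw : w ∈ F u) : ((⟪w, p⟫ : ℝ) : EReal) ≤ HamE F u p :=
  le_sSup ⟨w, hw, rfl⟩

theorem inner_le_of_HamE_le {ut vt : EuclideanSpace ℝ (Fin n)} {c : ℝ} (hw : w ∈ F u)
    (hargmax : ((⟪vt, p⟫ : ℝ) : EReal) = HamE F ut p)
    (hbound : HamE F u p ≤ HamE F ut p + (c : EReal)) :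
    ⟪w, p⟫ ≤ ⟪vt, p⟫ + c := by
  have h : ((⟪w, p⟫ : ℝ) : EReal) ≤ ((⟪vt, p⟫ + c : ℝ) : EReal) :=
    calc ((⟪w, p⟫ : ℝ) : EReal) ≤ HamE F u p := inner_le_HamE_of_mem hw
      _ ≤ HamE F ut p + (c : EReal) := hbound
      _ = ((⟪vt, p⟫ + c : ℝ) : EReal) := by rw [← hargmax, EReal.coe_add]
  exact EReal.coe_le_coe_iff.mp h

end Hamiltonian

theorem stmt17_general {n : ℕ} (g : EuclideanSpace ℝ (Fin n) → ℝ)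
    (F : EuclideanSpace ℝ (Fin n) → Set (EuclideanSpace ℝ (Fin n)))
    (ut vt p q s : EuclideanSpace ℝ (Fin n))
    (hargmax : ((⟪vt, p⟫ : ℝ) : EReal) = HamE F ut p)
    (hs : ∀ u : EuclideanSpace ℝ (Fin n), (⟪s, u - ut⟫ : ℝ) ≤ g u - g ut)
    (hqs : ∀ u : EuclideanSpace ℝ (Fin n),
      HamE F u p ≤ HamE F ut p + ((⟪q + s, u - ut⟫ : ℝ) : EReal)) :
    ∀ u w : EuclideanSpace ℝ (Fin n), w ∈ F u →
      (⟪w - vt, p⟫ : ℝ) - ⟪q, u - ut⟫ ≤ g u - g ut := by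
  intro u w hw
  have hcoadj : ⟪w, p⟫ ≤ ⟪vt, p⟫ + ⟪q + s, u - ut⟫ := inner_le_of_HamE_le hw hargmax (hqs u)
  rw [inner_add_left] at hcoadj
  rw [inner_sub_left]
  linarith [hs u]

/-- Pointwise core of the sufficiency Theorem 5.1: if `ṽ ∈ F_A(ũ; p)`, `s ∈ ∂g(ũ)` and
`q + s ∈ F*(p; (ũ, ṽ))`, then `g(u) − g(ũ) ≥ ⟨w − ṽ, p⟩ − ⟨q, u − ũ⟩` on `gph F`. -/
theorem stmt17 {n : ℕ} (g : EuclideanSpace ℝ (Fin n) → ℝ) (hg : ConvexOn ℝ Set.univ g)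
    (F : EuclideanSpace ℝ (Fin n) → Set (EuclideanSpace ℝ (Fin n)))
    (hF : Convex ℝ {z : EuclideanSpace ℝ (Fin n) × EuclideanSpace ℝ (Fin n) | z.2 ∈ F z.1})
    (ut vt p q s : EuclideanSpace ℝ (Fin n)) (hvt : vt ∈ F ut)
    (hargmax : ((⟪vt, p⟫ : ℝ) : EReal) = HamE F ut p)
    (hs : ∀ u : EuclideanSpace ℝ (Fin n), (⟪s, u - ut⟫ : ℝ) ≤ g u - g ut)
    (hqs : ∀ u : EuclideanSpace ℝ (Fin n),
      HamE F u p ≤ HamE F ut p + ((⟪q + s, u - ut⟫ : ℝ) : EReal)) :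
    ∀ u w : EuclideanSpace ℝ (Fin n), w ∈ F u →
      (⟪w - vt, p⟫ : ℝ) - ⟪q, u - ut⟫ ≤ g u - g ut :=
  stmt17_general g F ut vt p q s hargmax hs hqs
end
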